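/- arXiv:1903.08823 — 3 statements merged into one kernel-verified Lean document; each statement's English description precedes it below -/
import Mathlib

section
/- For a real parameter a and the limiting hard edge Bessel kernel K_∞^{(a)}(x,y) = (√y J_a(√x) J_a'(√y) − √x J_a'(√x) J_a(√y)) / (2(x−y)) defined for distinct x, y > 0, the function L_1^{(a)}(x,y) = (a/8) J_a(√x) J_a(√y) satisfies L_1^{(a)}(x,y) = (a/2)(x ∂_x + y ∂_y + 1) K_∞^{(a)}(x,y). -/
/-- The Bessel function of the first kind of order `α`. -/
noncomputable def besselJ (α : ℝ) (u : ℝ) : ℝ :=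
  ∑' m : ℕ, (-1 : ℝ) ^ m * (u / 2) ^ (2 * (m : ℝ) + α) /
    ((Nat.factorial m) * Real.Gamma ((m : ℝ) + α + 1))

/-- The derivative of the Bessel function with respect to its argument. -/
noncomputable def besselJ' (α : ℝ) (u : ℝ) : ℝ := deriv (besselJ α) u

/-- The limiting hard edge Bessel kernel
`K_∞^{(a)}(x,y) = (√y J_a(√x) J_a'(√y) − √x J_a'(√x) J_a(√y)) / (2(x−y))`. -/
noncomputable def hardEdgeKernel (a : ℝ) (x y : ℝ) : ℝ :=
  (Real.sqrt y * besselJ a (Real.sqrt x) * besselJ' a (Real.sqrt y) -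
    Real.sqrt x * besselJ' a (Real.sqrt x) * besselJ a (Real.sqrt y)) / (2 * (x - y))

namespace BesselProofAux

open Filter Metric

/-- Coefficients of the entire part of the Bessel series. -/
noncomputable def c (α : ℝ) (m : ℕ) : ℝ :=
  (-1 : ℝ) ^ m / (Nat.factorial m * Real.Gamma ((m : ℝ) + α + 1))

lemma c_rec (α : ℝ) (m : ℕ) :
    ((m : ℝ) + 1) * ((m : ℝ) + α + 1) * c α (m + 1) = - c α m := by
  by_cases h : (m : ℝ) + α + 1 = 0
  · rw [h]
    have hm : c α m = 0 := by
      rw [c, h, Real.Gamma_zero, mul_zero, div_zero]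
    simp [hm]
  · have harg : ((m + 1 : ℕ) : ℝ) + α + 1 = ((m : ℝ) + α + 1) + 1 := by push_cast; ring
    have hg2 : Real.Gamma (((m + 1 : ℕ) : ℝ) + α + 1)
        = ((m : ℝ) + α + 1) * Real.Gamma ((m : ℝ) + α + 1) := by
      rw [harg, Real.Gamma_add_one h]
    by_cases hg : Real.Gamma ((m : ℝ) + α + 1) = 0
    · have hm : c α m = 0 := by rw [c, hg, mul_zero, div_zero]
      have hm1 : c α (m + 1) = 0 := by
        rw [c, hg2, hg, mul_zero, mul_zero, div_zero]
      simp [hm, hm1]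
    · rw [c, c, hg2]
      have hfac : ((m + 1).factorial : ℝ) = ((m : ℝ) + 1) * (m.factorial : ℝ) := by
        rw [Nat.factorial_succ]; push_cast; ring
      rw [hfac, pow_succ]
      have hf0 : (m.factorial : ℝ) ≠ 0 := Nat.cast_ne_zero.2 (Nat.factorial_ne_zero m)
      have hm1 : ((m : ℝ) + 1) ≠ 0 := by positivity
      field_simp

lemma summable_weight (α : ℝ) {R : ℝ} (hR : 0 ≤ R) :
    Summable (fun m : ℕ => |c α m| * ((m : ℝ) + 1) ^ 2 * R ^ m) := by
  refine summable_of_ratio_norm_eventually_le (r := 1/2) (by norm_num) ?_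
  obtain ⟨N, hN⟩ := exists_nat_gt (8 * (R + 1) + |α| + 2)
  rw [eventually_atTop]
  refine ⟨N, fun m hm => ?_⟩
  have hmN : (N : ℝ) ≤ (m : ℝ) := Nat.cast_le.2 hm
  have habs : -|α| ≤ α := neg_abs_le α
  have hpos : (0 : ℝ) < (m : ℝ) + α + 1 := by nlinarith
  have hR8 : (0:ℝ) < 8 * (R + 1) := by nlinarith
  have hbig : 8 * (R + 1) ≤ ((m : ℝ) + 1) * ((m : ℝ) + α + 1) := by nlinarith
  have hprod : (0 : ℝ) < ((m : ℝ) + 1) * ((m : ℝ) + α + 1) := by positivity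
  have hc : (((m : ℝ) + 1) * ((m : ℝ) + α + 1)) * |c α (m + 1)| = |c α m| := by
    calc (((m : ℝ) + 1) * ((m : ℝ) + α + 1)) * |c α (m + 1)|
        = |((m : ℝ) + 1) * ((m : ℝ) + α + 1) * c α (m + 1)| := by
          rw [abs_mul, abs_of_pos hprod]
      _ = |c α m| := by rw [c_rec α m, abs_neg]
  have h1 : (0:ℝ) ≤ |c α (m+1)| := abs_nonneg _
  have h2 : (0:ℝ) ≤ R ^ m := pow_nonneg hR m
  have hbs : 0 ≤ |c α (m+1)| * R ^ m := mul_nonneg h1 h2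
  have key1 : (((m:ℝ)+1)+1)^2 * R ≤ 4*(((m:ℝ)+1)^2)*(R+1) := by
    nlinarith [mul_nonneg hR (mul_nonneg (by positivity : (0:ℝ) ≤ 3*((m:ℝ)+1)+1)
      (by positivity : (0:ℝ) ≤ (m:ℝ))), sq_nonneg ((m:ℝ)+1)]
  have key2 : 4*(R+1) ≤ (1/2) * (((m:ℝ)+1)*((m:ℝ)+α+1)) := by linarith
  have hgoal : |c α (m + 1)| * (((m:ℝ) + 1) + 1) ^ 2 * R ^ (m + 1)
      ≤ 1 / 2 * (|c α m| * ((m:ℝ) + 1) ^ 2 * R ^ m) := by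
    rw [← hc, pow_succ]
    calc |c α (m + 1)| * (((m:ℝ)+1)+1)^2 * (R^m * R)
        = (|c α (m+1)| * R^m) * ((((m:ℝ)+1)+1)^2 * R) := by ring
      _ ≤ (|c α (m+1)| * R^m) * (4*(((m:ℝ)+1)^2)*(R+1)) :=
          mul_le_mul_of_nonneg_left key1 hbs
      _ = (4*(R+1)) * ((|c α (m+1)| * R^m) * (((m:ℝ)+1)^2)) := by ring
      _ ≤ ((1/2) * (((m:ℝ)+1)*((m:ℝ)+α+1))) * ((|c α (m+1)| * R^m) * (((m:ℝ)+1)^2)) :=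
          mul_le_mul_of_nonneg_right key2 (by positivity)
      _ = 1 / 2 * ((((m:ℝ)+1) * ((m:ℝ)+α+1) * |c α (m+1)|) * ((m:ℝ)+1)^2 * R^m) := by ring
  have hnn1 : (0:ℝ) ≤ |c α (m+1)| * ((((m+1:ℕ):ℝ)) + 1) ^ 2 * R ^ (m+1) :=
    mul_nonneg (mul_nonneg (abs_nonneg _) (by positivity)) (pow_nonneg hR _)
  have hnn2 : (0:ℝ) ≤ |c α m| * (((m:ℕ):ℝ) + 1) ^ 2 * R ^ m :=
    mul_nonneg (mul_nonneg (abs_nonneg _) (by positivity)) (pow_nonneg hR _)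
  calc ‖|c α (m + 1)| * ((↑(m + 1) : ℝ) + 1) ^ 2 * R ^ (m + 1)‖
      = |c α (m + 1)| * (((m:ℝ) + 1) + 1) ^ 2 * R ^ (m + 1) := by
        rw [Real.norm_eq_abs, abs_of_nonneg hnn1]; push_cast; ring
    _ ≤ 1 / 2 * (|c α m| * ((m:ℝ) + 1) ^ 2 * R ^ m) := hgoal
    _ = 1 / 2 * ‖|c α m| * ((m:ℝ) + 1) ^ 2 * R ^ m‖ := by
        rw [Real.norm_eq_abs, abs_of_nonneg hnn2]

lemma summable_term (α : ℝ) {R : ℝ} (hR : 0 ≤ R) {w : ℕ → ℝ}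
    (hw : ∀ m, |w m| ≤ ((m : ℝ) + 1) ^ 2 * R ^ m) :
    Summable (fun m => c α m * w m) := by
  refine Summable.of_abs (Summable.of_nonneg_of_le (fun m => abs_nonneg _)
    (fun m => ?_) (summable_weight α hR))
  calc |c α m * w m| = |c α m| * |w m| := abs_mul _ _
    _ ≤ |c α m| * (((m : ℝ) + 1) ^ 2 * R ^ m) :=
        mul_le_mul_of_nonneg_left (hw m) (abs_nonneg _)
    _ = |c α m| * ((m : ℝ) + 1) ^ 2 * R ^ m := by ring

lemma pow_bound {t R : ℝ} (h : |t| ≤ R) (hR : 1 ≤ R) {k m : ℕ} (hk : k ≤ m) :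
    |t| ^ k ≤ R ^ m :=
  le_trans (pow_le_pow_left₀ (abs_nonneg t) h k) (pow_le_pow_right₀ hR hk)

lemma bound_helper {A B k : ℝ} (hA : 0 ≤ A) (hAB : A ≤ B) (hk : 0 ≤ k) (hB : 0 ≤ B) :
    k * A ≤ (k + 1) ^ 2 * B := by
  nlinarith [mul_le_mul_of_nonneg_left hAB (sq_nonneg (k+1)),
    mul_nonneg (mul_nonneg hk hk) hA, mul_nonneg hk hA]

lemma bound_helper2 {A B k j : ℝ} (hA : 0 ≤ A) (hAB : A ≤ B) (hk : 0 ≤ k)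
    (hj0 : 0 ≤ j) (hj : j ≤ k) (hB : 0 ≤ B) :
    k * (j * A) ≤ (k + 1) ^ 2 * B := by
  nlinarith [mul_le_mul_of_nonneg_left hAB (sq_nonneg (k+1)),
    mul_nonneg (mul_nonneg hk (sub_nonneg.2 hj)) hA,
    mul_nonneg (mul_nonneg hk hj0) hA, mul_nonneg hk hA]

/-- `F α t = ∑ cₘ tᵐ`, the entire factor: `J_α(u) = (u/2)^α F α (u²/4)`. -/
noncomputable def F (α t : ℝ) : ℝ := ∑' m : ℕ, c α m * t ^ m

noncomputable def F1 (α t : ℝ) : ℝ := ∑' m : ℕ, c α m * ((m : ℝ) * t ^ (m - 1))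

noncomputable def F2 (α t : ℝ) : ℝ :=
  ∑' m : ℕ, c α m * ((m : ℝ) * (((m - 1 : ℕ) : ℝ) * t ^ (m - 1 - 1)))

lemma bound0 {t R : ℝ} (ht : |t| ≤ R) (hR : 1 ≤ R) (m : ℕ) :
    |t ^ m| ≤ ((m : ℝ) + 1) ^ 2 * R ^ m := by
  rw [abs_pow]
  have h1 : |t| ^ m ≤ R ^ m := pow_bound ht hR le_rfl
  have hR0' : (0:ℝ) ≤ R := le_trans zero_le_one hR
  have h2 : (0:ℝ) ≤ ((m:ℝ)^2 + 2*(m:ℝ)) * R ^ m := by positivity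
  nlinarith [h1, h2]

lemma bound1 {t R : ℝ} (ht : |t| ≤ R) (hR : 1 ≤ R) (m : ℕ) :
    |(m : ℝ) * t ^ (m - 1)| ≤ ((m : ℝ) + 1) ^ 2 * R ^ m := by
  rw [abs_mul, Nat.abs_cast, abs_pow]
  exact bound_helper (pow_nonneg (abs_nonneg t) _)
    (pow_bound ht hR (Nat.sub_le m 1)) (Nat.cast_nonneg m)
    (pow_nonneg (le_trans zero_le_one hR) m)

lemma bound2 {t R : ℝ} (ht : |t| ≤ R) (hR : 1 ≤ R) (m : ℕ) :
    |(m : ℝ) * (((m - 1 : ℕ) : ℝ) * t ^ (m - 1 - 1))| ≤ ((m : ℝ) + 1) ^ 2 * R ^ m := by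
  rw [abs_mul, Nat.abs_cast, abs_mul, Nat.abs_cast, abs_pow]
  exact bound_helper2 (pow_nonneg (abs_nonneg t) _)
    (pow_bound ht hR (le_trans (Nat.sub_le _ 1) (Nat.sub_le m 1)))
    (Nat.cast_nonneg m) (Nat.cast_nonneg _)
    (Nat.cast_le.2 (Nat.sub_le m 1))
    (pow_nonneg (le_trans zero_le_one hR) m)

lemma htR {t : ℝ} : |t| ≤ |t| + 2 := by linarith [abs_nonneg t]
lemma hR1 {t : ℝ} : (1:ℝ) ≤ |t| + 2 := by linarith [abs_nonneg t]
lemma hR0 {t : ℝ} : (0:ℝ) ≤ |t| + 2 := by linarith [abs_nonneg t]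

lemma S0 (α t : ℝ) : Summable (fun m : ℕ => c α m * t ^ m) :=
  summable_term α hR0 (fun m => bound0 htR hR1 m)

lemma S1 (α t : ℝ) : Summable (fun m : ℕ => c α m * ((m : ℝ) * t ^ (m - 1))) :=
  summable_term α hR0 (fun m => bound1 htR hR1 m)

lemma S2 (α t : ℝ) :
    Summable (fun m : ℕ => c α m * ((m : ℝ) * (((m - 1 : ℕ) : ℝ) * t ^ (m - 1 - 1)))) :=
  summable_term α hR0 (fun m => bound2 htR hR1 m)

lemma hasDerivAt_F (α t : ℝ) : HasDerivAt (F α) (F1 α t) t := by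
  have hball : t ∈ ball (0 : ℝ) (|t| + 2) := by
    rw [mem_ball_zero_iff, Real.norm_eq_abs]; linarith
  refine hasDerivAt_tsum_of_isPreconnected
    (u := fun m : ℕ => |c α m| * ((m : ℝ) + 1) ^ 2 * (|t| + 2) ^ m)
    (summable_weight α hR0) isOpen_ball (convex_ball (0:ℝ) (|t|+2)).isPreconnected
    (fun n y _ => (hasDerivAt_pow n y).const_mul (c α n))
    (fun n y hy => ?_) hball (S0 α t) hball
  have hyR : |y| ≤ |t| + 2 := by
    rw [mem_ball_zero_iff, Real.norm_eq_abs] at hy; linarith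
  rw [Real.norm_eq_abs, abs_mul]
  calc |c α n| * |(n : ℝ) * y ^ (n - 1)|
      ≤ |c α n| * (((n : ℝ) + 1) ^ 2 * (|t| + 2) ^ n) :=
        mul_le_mul_of_nonneg_left (bound1 hyR hR1 n) (abs_nonneg _)
    _ = |c α n| * ((n : ℝ) + 1) ^ 2 * (|t| + 2) ^ n := by ring

lemma hasDerivAt_F1 (α t : ℝ) : HasDerivAt (F1 α) (F2 α t) t := by
  have hball : t ∈ ball (0 : ℝ) (|t| + 2) := by
    rw [mem_ball_zero_iff, Real.norm_eq_abs]; linarith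
  refine hasDerivAt_tsum_of_isPreconnected
    (u := fun m : ℕ => |c α m| * ((m : ℝ) + 1) ^ 2 * (|t| + 2) ^ m)
    (summable_weight α hR0) isOpen_ball (convex_ball (0:ℝ) (|t|+2)).isPreconnected
    (fun n y _ => ((hasDerivAt_pow (n-1) y).const_mul ((n : ℝ))).const_mul (c α n))
    (fun n y hy => ?_) hball (S1 α t) hball
  have hyR : |y| ≤ |t| + 2 := by
    rw [mem_ball_zero_iff, Real.norm_eq_abs] at hy; linarith
  rw [Real.norm_eq_abs, abs_mul]
  calc |c α n| * |(n : ℝ) * (((n - 1 : ℕ) : ℝ) * y ^ (n - 1 - 1))|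
      ≤ |c α n| * (((n : ℝ) + 1) ^ 2 * (|t| + 2) ^ n) :=
        mul_le_mul_of_nonneg_left (bound2 hyR hR1 n) (abs_nonneg _)
    _ = |c α n| * ((n : ℝ) + 1) ^ 2 * (|t| + 2) ^ n := by ring

/-- The hypergeometric-type ODE satisfied by `F`. -/
lemma F_ode (α t : ℝ) : t * F2 α t + (α + 1) * F1 α t + F α t = 0 := by
  have s0 := S0 α t
  have s1 := S1 α t
  have s2 := S2 α t
  have s2' : Summable (fun m : ℕ =>
      t * (c α m * ((m : ℝ) * (((m - 1 : ℕ) : ℝ) * t ^ (m - 1 - 1))))) := s2.mul_left t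
  have s1' : Summable (fun m : ℕ => (α + 1) * (c α m * ((m : ℝ) * t ^ (m - 1)))) :=
    s1.mul_left (α + 1)
  -- the shifted series
  set g : ℕ → ℝ := fun m => if m = 0 then 0 else c α (m - 1) * t ^ (m - 1) with hg
  have hgsum : Summable g := by
    refine (summable_nat_add_iff 1).1 ?_
    exact s0.congr (fun n => by simp [hg])
  have hgval : ∑' m, g m = F α t := by
    rw [Summable.tsum_eq_zero_add hgsum]
    have h0 : g 0 = 0 := by simp [hg]
    have hs : ∀ n : ℕ, g (n + 1) = c α n * t ^ n := by intro n; simp [hg]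
    rw [h0, zero_add, show F α t = ∑' m : ℕ, c α m * t ^ m from rfl]
    exact tsum_congr hs
  have key : ∀ m : ℕ,
      t * (c α m * ((m : ℝ) * (((m - 1 : ℕ) : ℝ) * t ^ (m - 1 - 1)))) +
        (α + 1) * (c α m * ((m : ℝ) * t ^ (m - 1))) + c α m * t ^ m
      = c α m * t ^ m - g m := by
    intro m
    match m with
    | 0 => simp [hg]
    | 1 =>
      simp only [hg]
      norm_num
      have h := c_rec α 0
      norm_num at h
      linear_combination h
    | (n+2) =>
      simp only [hg]
      norm_num [Nat.add_sub_cancel]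
      have h := c_rec α (n+1)
      push_cast at h ⊢
      have hpow : t * t ^ n = t ^ (n + 1) := (pow_succ' t n).symm ▸ rfl
      linear_combination (t ^ (n+1)) * h
  have step1 : ∑' m : ℕ,
      (t * (c α m * ((m : ℝ) * (((m - 1 : ℕ) : ℝ) * t ^ (m - 1 - 1)))) +
        (α + 1) * (c α m * ((m : ℝ) * t ^ (m - 1))) + c α m * t ^ m)
      = ∑' m : ℕ, (c α m * t ^ m - g m) := tsum_congr key
  have step2 : ∑' m : ℕ, (c α m * t ^ m - g m)
      = (∑' m : ℕ, c α m * t ^ m) - ∑' m, g m := Summable.tsum_sub s0 hgsum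
  have step3 : ∑' m : ℕ,
      (t * (c α m * ((m : ℝ) * (((m - 1 : ℕ) : ℝ) * t ^ (m - 1 - 1)))) +
        (α + 1) * (c α m * ((m : ℝ) * t ^ (m - 1))) + c α m * t ^ m)
      = (∑' m : ℕ, (t * (c α m * ((m : ℝ) * (((m - 1 : ℕ) : ℝ) * t ^ (m - 1 - 1)))) +
          (α + 1) * (c α m * ((m : ℝ) * t ^ (m - 1)))))
        + ∑' m : ℕ, c α m * t ^ m := Summable.tsum_add (s2'.add s1') s0
  have step4 : ∑' m : ℕ,
      (t * (c α m * ((m : ℝ) * (((m - 1 : ℕ) : ℝ) * t ^ (m - 1 - 1)))) +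
        (α + 1) * (c α m * ((m : ℝ) * t ^ (m - 1))))
      = (∑' m : ℕ, t * (c α m * ((m : ℝ) * (((m - 1 : ℕ) : ℝ) * t ^ (m - 1 - 1)))))
        + ∑' m : ℕ, (α + 1) * (c α m * ((m : ℝ) * t ^ (m - 1))) := Summable.tsum_add s2' s1'
  have step5 : ∑' m : ℕ, t * (c α m * ((m : ℝ) * (((m - 1 : ℕ) : ℝ) * t ^ (m - 1 - 1))))
      = t * F2 α t := tsum_mul_left
  have step6 : ∑' m : ℕ, (α + 1) * (c α m * ((m : ℝ) * t ^ (m - 1)))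
      = (α + 1) * F1 α t := tsum_mul_left
  have := step3.symm.trans (step1.trans step2)
  rw [step4, step5, step6, hgval] at this
  rw [show t * F2 α t + (α + 1) * F1 α t + F α t
      = (t * F2 α t + (α + 1) * F1 α t) + F α t from rfl]
  have hF : (∑' m : ℕ, c α m * t ^ m) = F α t := rfl
  rw [hF] at this
  linarith [this]

/-- Factorization of `besselJ` for positive arguments. -/
lemma besselJ_eq (α : ℝ) {u : ℝ} (hu : 0 < u) :
    besselJ α u = (u / 2) ^ α * F α (u ^ 2 / 4) := by
  have h2 : (0 : ℝ) < u / 2 := by linarith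
  rw [besselJ, F, ← tsum_mul_left]
  refine tsum_congr fun m => ?_
  have hsplit : (u / 2) ^ (2 * (m : ℝ) + α) = (u / 2) ^ α * (u ^ 2 / 4) ^ m := by
    rw [show (2 * (m : ℝ) + α) = ((2 * m : ℕ) : ℝ) + α by push_cast; ring,
      Real.rpow_add h2, Real.rpow_natCast, pow_mul]
    have : (u / 2) ^ 2 = u ^ 2 / 4 := by ring
    rw [this, mul_comm]
  rw [hsplit, c]
  ring

/-- Explicit expression for the derivative of (the positive-axis extension of) `besselJ`. -/
noncomputable def Jd (α u : ℝ) : ℝ :=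
  (u / 2) ^ α * (α / u * F α (u ^ 2 / 4) + u / 2 * F1 α (u ^ 2 / 4))

/-- Explicit expression for the second derivative. -/
noncomputable def Jdd (α u : ℝ) : ℝ :=
  (u / 2) ^ α * (α * (α - 1) / u ^ 2 * F α (u ^ 2 / 4) + (α + 1 / 2) * F1 α (u ^ 2 / 4)
    + u ^ 2 / 4 * F2 α (u ^ 2 / 4))

lemma hasDerivAt_half (u : ℝ) : HasDerivAt (fun v : ℝ => v / 2) (1 / 2) u := by
  simpa using (hasDerivAt_id u).div_const 2

lemma hasDerivAt_sq4 (u : ℝ) : HasDerivAt (fun v : ℝ => v ^ 2 / 4) (u / 2) u := by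
  have h := (hasDerivAt_pow 2 u).div_const 4
  refine h.congr_deriv ?_
  push_cast
  ring

lemma hasDerivAt_pow_half (α : ℝ) {u : ℝ} (hu : 0 < u) :
    HasDerivAt (fun v : ℝ => (v / 2) ^ α) (α * (u / 2) ^ (α - 1) * (1 / 2)) u := by
  have h2 : (0 : ℝ) < u / 2 := by linarith
  have h := Real.hasDerivAt_rpow_const (x := u / 2) (p := α) (Or.inl (ne_of_gt h2))
  exact h.comp u (hasDerivAt_half u)

lemma hasDerivAt_G (α : ℝ) {u : ℝ} (hu : 0 < u) :
    HasDerivAt (fun v : ℝ => (v / 2) ^ α * F α (v ^ 2 / 4)) (Jd α u) u := by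
  have h2 : (0 : ℝ) < u / 2 := by linarith
  have hF' : HasDerivAt (fun v : ℝ => F α (v ^ 2 / 4)) (F1 α (u ^ 2 / 4) * (u / 2)) u :=
    by have := (hasDerivAt_F α (u ^ 2 / 4)).comp u (hasDerivAt_sq4 u); exact this
  have h := (hasDerivAt_pow_half α hu).mul hF'
  refine h.congr_deriv ?_
  rw [Jd, Real.rpow_sub h2, Real.rpow_one]
  have hu0 : u ≠ 0 := ne_of_gt hu
  field_simp

lemma hasDerivAt_Jd (α : ℝ) {u : ℝ} (hu : 0 < u) :
    HasDerivAt (Jd α) (Jdd α u) u := by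
  have h2 : (0 : ℝ) < u / 2 := by linarith
  have hu0 : u ≠ 0 := ne_of_gt hu
  have hF' : HasDerivAt (fun v : ℝ => F α (v ^ 2 / 4)) (F1 α (u ^ 2 / 4) * (u / 2)) u :=
    by have := (hasDerivAt_F α (u ^ 2 / 4)).comp u (hasDerivAt_sq4 u); exact this
  have hF1' : HasDerivAt (fun v : ℝ => F1 α (v ^ 2 / 4)) (F2 α (u ^ 2 / 4) * (u / 2)) u :=
    by have := (hasDerivAt_F1 α (u ^ 2 / 4)).comp u (hasDerivAt_sq4 u); exact this
  have hinv : HasDerivAt (fun v : ℝ => α / v) (α * -(u ^ 2)⁻¹) u := by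
    have h := (hasDerivAt_inv hu0).const_mul α
    refine HasDerivAt.congr_of_eventuallyEq h ?_
    filter_upwards with v
    rw [div_eq_mul_inv]
  have hmain := (hasDerivAt_pow_half α hu).mul
    ((hinv.mul hF').add ((hasDerivAt_half u).mul hF1'))
  unfold Jd
  refine hmain.congr_deriv ?_
  simp only [Pi.mul_apply, Pi.add_apply]
  rw [Jdd, Real.rpow_sub h2, Real.rpow_one]
  field_simp
  ring

lemma besselJ_eventuallyEq (α : ℝ) {u : ℝ} (hu : 0 < u) :
    besselJ α =ᶠ[nhds u] fun v => (v / 2) ^ α * F α (v ^ 2 / 4) :=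
  Filter.eventuallyEq_of_mem (Ioi_mem_nhds hu) (fun v hv => besselJ_eq α hv)

lemma hasDerivAt_besselJ (α : ℝ) {u : ℝ} (hu : 0 < u) :
    HasDerivAt (besselJ α) (Jd α u) u :=
  (hasDerivAt_G α hu).congr_of_eventuallyEq (besselJ_eventuallyEq α hu)

lemma besselJ'_eq (α : ℝ) {u : ℝ} (hu : 0 < u) : besselJ' α u = Jd α u :=
  (hasDerivAt_besselJ α hu).deriv

lemma besselJ'_eventuallyEq (α : ℝ) {u : ℝ} (hu : 0 < u) :
    besselJ' α =ᶠ[nhds u] Jd α :=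
  Filter.eventuallyEq_of_mem (Ioi_mem_nhds hu) (fun v hv => besselJ'_eq α hv)

lemma hasDerivAt_besselJ' (α : ℝ) {u : ℝ} (hu : 0 < u) :
    HasDerivAt (besselJ' α) (Jdd α u) u :=
  (hasDerivAt_Jd α hu).congr_of_eventuallyEq (besselJ'_eventuallyEq α hu)

end BesselProofAux

set_option maxHeartbeats 2000000 in
open BesselProofAux in
theorem L1_eq_derivative_of_hardEdgeKernel (a : ℝ) (x y : ℝ)
    (hx : 0 < x) (hy : 0 < y) (hxy : x ≠ y) :
    (a / 8) * besselJ a (Real.sqrt x) * besselJ a (Real.sqrt y) =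
      (a / 2) * (x * deriv (fun t => hardEdgeKernel a t y) x +
        y * deriv (fun t => hardEdgeKernel a x t) y + hardEdgeKernel a x y) := by
  have hp : 0 < Real.sqrt x := Real.sqrt_pos.2 hx
  have hq : 0 < Real.sqrt y := Real.sqrt_pos.2 hy
  have hd1 : (2 : ℝ) * (x - y) ≠ 0 := mul_ne_zero two_ne_zero (sub_ne_zero.2 hxy)
  -- derivative in the first variable
  have hs : HasDerivAt Real.sqrt (1 / (2 * Real.sqrt x)) x :=
    Real.hasDerivAt_sqrt (ne_of_gt hx)
  have hJx : HasDerivAt (fun t => besselJ a (Real.sqrt t))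
      (Jd a (Real.sqrt x) * (1 / (2 * Real.sqrt x))) x :=
    (hasDerivAt_besselJ a hp).comp x hs
  have hJ'x : HasDerivAt (fun t => besselJ' a (Real.sqrt t))
      (Jdd a (Real.sqrt x) * (1 / (2 * Real.sqrt x))) x :=
    (hasDerivAt_besselJ' a hp).comp x hs
  have h1 : HasDerivAt (fun t => Real.sqrt y * besselJ a (Real.sqrt t))
      (Real.sqrt y * (Jd a (Real.sqrt x) * (1 / (2 * Real.sqrt x)))) x :=
    hJx.const_mul _
  have h2 : HasDerivAt (fun t => Real.sqrt t * besselJ' a (Real.sqrt t))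
      (1 / (2 * Real.sqrt x) * besselJ' a (Real.sqrt x) +
        Real.sqrt x * (Jdd a (Real.sqrt x) * (1 / (2 * Real.sqrt x)))) x :=
    hs.mul hJ'x
  have hnum : HasDerivAt (fun t => Real.sqrt y * besselJ a (Real.sqrt t) *
        besselJ' a (Real.sqrt y) -
        Real.sqrt t * besselJ' a (Real.sqrt t) * besselJ a (Real.sqrt y))
      (Real.sqrt y * (Jd a (Real.sqrt x) * (1 / (2 * Real.sqrt x))) * besselJ' a (Real.sqrt y) -
        (1 / (2 * Real.sqrt x) * besselJ' a (Real.sqrt x) +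
          Real.sqrt x * (Jdd a (Real.sqrt x) * (1 / (2 * Real.sqrt x)))) *
          besselJ a (Real.sqrt y)) x :=
    (h1.mul_const _).sub (h2.mul_const _)
  have hden : HasDerivAt (fun t : ℝ => 2 * (t - y)) 2 x := by
    simpa using ((hasDerivAt_id x).sub_const y).const_mul (2 : ℝ)
  have hKx : HasDerivAt (fun t => hardEdgeKernel a t y)
      (((Real.sqrt y * (Jd a (Real.sqrt x) * (1 / (2 * Real.sqrt x))) * besselJ' a (Real.sqrt y) -
        (1 / (2 * Real.sqrt x) * besselJ' a (Real.sqrt x) +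
          Real.sqrt x * (Jdd a (Real.sqrt x) * (1 / (2 * Real.sqrt x)))) *
          besselJ a (Real.sqrt y)) * (2 * (x - y)) -
        (Real.sqrt y * besselJ a (Real.sqrt x) * besselJ' a (Real.sqrt y) -
          Real.sqrt x * besselJ' a (Real.sqrt x) * besselJ a (Real.sqrt y)) * 2) /
        (2 * (x - y)) ^ 2) x := hnum.div hden hd1
  -- derivative in the second variable
  have hsy : HasDerivAt Real.sqrt (1 / (2 * Real.sqrt y)) y :=
    Real.hasDerivAt_sqrt (ne_of_gt hy)
  have hJy : HasDerivAt (fun t => besselJ a (Real.sqrt t))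
      (Jd a (Real.sqrt y) * (1 / (2 * Real.sqrt y))) y :=
    (hasDerivAt_besselJ a hq).comp y hsy
  have hJ'y : HasDerivAt (fun t => besselJ' a (Real.sqrt t))
      (Jdd a (Real.sqrt y) * (1 / (2 * Real.sqrt y))) y :=
    (hasDerivAt_besselJ' a hq).comp y hsy
  have h3 : HasDerivAt (fun t => Real.sqrt t * besselJ a (Real.sqrt x))
      (1 / (2 * Real.sqrt y) * besselJ a (Real.sqrt x)) y := hsy.mul_const _
  have h4 : HasDerivAt (fun t => Real.sqrt t * besselJ a (Real.sqrt x) *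
        besselJ' a (Real.sqrt t))
      (1 / (2 * Real.sqrt y) * besselJ a (Real.sqrt x) * besselJ' a (Real.sqrt y) +
        Real.sqrt y * besselJ a (Real.sqrt x) *
          (Jdd a (Real.sqrt y) * (1 / (2 * Real.sqrt y)))) y := h3.mul hJ'y
  have h5 : HasDerivAt (fun t => Real.sqrt x * besselJ' a (Real.sqrt x) *
        besselJ a (Real.sqrt t))
      (Real.sqrt x * besselJ' a (Real.sqrt x) *
        (Jd a (Real.sqrt y) * (1 / (2 * Real.sqrt y)))) y := hJy.const_mul _
  have hnum2 : HasDerivAt (fun t => Real.sqrt t * besselJ a (Real.sqrt x) *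
        besselJ' a (Real.sqrt t) -
        Real.sqrt x * besselJ' a (Real.sqrt x) * besselJ a (Real.sqrt t))
      ((1 / (2 * Real.sqrt y) * besselJ a (Real.sqrt x) * besselJ' a (Real.sqrt y) +
        Real.sqrt y * besselJ a (Real.sqrt x) *
          (Jdd a (Real.sqrt y) * (1 / (2 * Real.sqrt y)))) -
        Real.sqrt x * besselJ' a (Real.sqrt x) *
          (Jd a (Real.sqrt y) * (1 / (2 * Real.sqrt y)))) y := h4.sub h5
  have hden2 : HasDerivAt (fun t : ℝ => 2 * (x - t)) (-2) y := by
    have := ((hasDerivAt_id y).const_sub x).const_mul (2 : ℝ)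
    simpa using this
  have hKy : HasDerivAt (fun t => hardEdgeKernel a x t)
      ((((1 / (2 * Real.sqrt y) * besselJ a (Real.sqrt x) * besselJ' a (Real.sqrt y) +
        Real.sqrt y * besselJ a (Real.sqrt x) *
          (Jdd a (Real.sqrt y) * (1 / (2 * Real.sqrt y)))) -
        Real.sqrt x * besselJ' a (Real.sqrt x) *
          (Jd a (Real.sqrt y) * (1 / (2 * Real.sqrt y)))) * (2 * (x - y)) -
        (Real.sqrt y * besselJ a (Real.sqrt x) * besselJ' a (Real.sqrt y) -
          Real.sqrt x * besselJ' a (Real.sqrt x) * besselJ a (Real.sqrt y)) * (-2)) /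
        (2 * (x - y)) ^ 2) y := hnum2.div hden2 hd1
  rw [hKx.deriv, hKy.deriv]
  simp only [hardEdgeKernel]
  rw [besselJ'_eq a hp, besselJ'_eq a hq, besselJ_eq a hp, besselJ_eq a hq]
  simp only [Jd, Jdd]
  set p := Real.sqrt x with hpd
  set q := Real.sqrt y with hqd
  have hp2 : p ^ 2 = x := Real.sq_sqrt hx.le
  have hq2 : q ^ 2 = y := Real.sq_sqrt hy.le
  clear_value p q
  have hpq2 : p ^ 2 ≠ q ^ 2 := by rw [hp2, hq2]; exact hxy
  rw [← hp2, ← hq2]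
  have hp0 : p ≠ 0 := ne_of_gt hp
  have hq0 : q ≠ 0 := ne_of_gt hq
  have hodex := F_ode a (p ^ 2 / 4)
  have hodey := F_ode a (q ^ 2 / 4)
  have hf2x : F2 a (p ^ 2 / 4) =
      (-(a + 1) * F1 a (p ^ 2 / 4) - F a (p ^ 2 / 4)) * 4 / p ^ 2 := by
    field_simp
    linarith [hodex]
  have hf2y : F2 a (q ^ 2 / 4) =
      (-(a + 1) * F1 a (q ^ 2 / 4) - F a (q ^ 2 / 4)) * 4 / q ^ 2 := by
    field_simp
    linarith [hodey]
  rw [hf2x, hf2y]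
  have hpqs : p ^ 2 - q ^ 2 ≠ 0 := sub_ne_zero.2 hpq2
  field_simp
  ring
end

section
/- Let a ∈ ℤ_{>0} and β > 0. Define M_a(A,B,C) = ∏_{j=1}^a Γ(1+A+B−C+jC)Γ(1+jC)/(Γ(1+A−C+jC)Γ(1+B−C+jC)Γ(1+C)). Then 1/M_a(2/β−1, N, 2/β) = ∏_{j=1}^a Γ(2j/β)Γ(1+N+2(j−1)/β)Γ(1+2/β)/(Γ(N+2j/β)Γ(1+2j/β)), and as N → ∞, N·( N^{2a/β−a}/M_a(2/β−1,N,2/β) · Γ(1+a)/Γ(2/β)^a − 1 ) → (a²/β)(1 − 2/β). -/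
open Filter Real

lemma Gamma_add_nat (s : ℝ) (hs : 0 < s) (n : ℕ) :
    Real.Gamma (s + n) = Real.Gamma s * ∏ k ∈ Finset.range n, (s + k) := by
  induction n with
  | zero => simp
  | succ n ih =>
    have h : s + ((n : ℕ) + 1 : ℕ) = (s + n) + 1 := by push_cast; ring
    rw [h, Real.Gamma_add_one (by positivity), ih, Finset.prod_range_succ]; ring

lemma telescope (u : ℕ → ℝ) (N M : ℕ) (h : N ≤ M) :
    ∑ k ∈ Finset.Ico N M, (u k - u (k + 1)) = u N - u M := by
  induction M, h using Nat.le_induction with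
  | base => simp
  | succ M hNM ih => rw [Finset.sum_Ico_succ_top hNM, ih]; ring

lemma psi_bound {u : ℝ} (h0 : 0 ≤ u) (h1 : u ≤ 1 / 2) :
    |Real.log (1 + u) - u + u ^ 2 / 2| ≤ 2 * u ^ 3 := by
  have h := Real.abs_log_sub_add_sum_range_le (x := -u)
    (by rw [abs_neg, abs_of_nonneg h0]; linarith) 2
  simp only [Finset.sum_range_succ, Finset.sum_range_zero, Nat.cast_zero, Nat.cast_one] at h
  rw [abs_neg, abs_of_nonneg h0] at h
  have h2 : (0 : ℝ) + (-u) ^ (0 + 1) / (0 + 1) + (-u) ^ (1 + 1) / (1 + 1) + Real.log (1 - -u)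
      = Real.log (1 + u) - u + u ^ 2 / 2 := by ring_nf
  rw [h2] at h
  refine h.trans ?_
  rw [show u ^ (2 + 1) = u ^ 3 by norm_num, div_le_iff₀ (by linarith)]
  nlinarith [pow_nonneg h0 3]

lemma tri4 (A B C D : ℝ) : |A + B - C + D| ≤ |A| + |B| + |C| + |D| := by
  have h1 : |A + B - C + D| ≤ |A + B - C| + |D| := abs_add_le _ _
  have h2 : |A + B - C| ≤ |A + B| + |C| := by
    simpa [sub_eq_add_neg, abs_neg] using abs_add_le (A + B) (-C)
  have h3 : |A + B| ≤ |A| + |B| := abs_add_le _ _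
  linarith

lemma ratio_tendsto_one (s t : ℝ) (hs : 0 < s) (ht : 0 < t) :
    Tendsto (fun n : ℕ => (n : ℝ) ^ (t - s) * Real.Gamma (n + s) / Real.Gamma (n + t))
      atTop (nhds 1) := by
  have hGs : 0 < Real.Gamma s := Real.Gamma_pos_of_pos hs
  have hGt : 0 < Real.Gamma t := Real.Gamma_pos_of_pos ht
  rw [← tendsto_add_atTop_iff_nat 1]
  have h1 : Tendsto (fun n : ℕ => (((n : ℝ) + 1) / n) ^ (t - s) * (Real.Gamma s / Real.Gamma t) *
      (Real.GammaSeq t n / Real.GammaSeq s n)) atTop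
      (nhds ((1 : ℝ) ^ (t - s) * (Real.Gamma s / Real.Gamma t) *
        (Real.Gamma t / Real.Gamma s))) := by
    refine Tendsto.mul (Tendsto.mul ?_ tendsto_const_nhds) ?_
    · apply Tendsto.rpow_const
      · have : Tendsto (fun n : ℕ => 1 + (n : ℝ)⁻¹) atTop (nhds (1 + 0)) :=
          tendsto_const_nhds.add (tendsto_inv_atTop_zero.comp tendsto_natCast_atTop_atTop)
        rw [add_zero] at this
        refine this.congr' ?_
        filter_upwards [eventually_ge_atTop 1] with n hn
        have : (n : ℝ) ≠ 0 := by positivity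
        field_simp
      · left; norm_num
    · exact (Real.GammaSeq_tendsto_Gamma t).div (Real.GammaSeq_tendsto_Gamma s) hGs.ne'
  rw [Real.one_rpow] at h1
  have hlim : Real.Gamma s / Real.Gamma t * (Real.Gamma t / Real.Gamma s) = 1 := by
    field_simp
  rw [one_mul, hlim] at h1
  refine h1.congr' ?_
  filter_upwards [eventually_ge_atTop 1] with n hn
  have hn0 : (0 : ℝ) < n := by exact_mod_cast hn
  have hGsn : Real.Gamma (((n : ℝ) + 1) + s) =
      Real.Gamma s * ∏ k ∈ Finset.range (n + 1), (s + k) := by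
    rw [show ((n : ℝ) + 1) + s = s + ((n + 1 : ℕ) : ℝ) by push_cast; ring,
      Gamma_add_nat s hs (n + 1)]
  have hGtn : Real.Gamma (((n : ℝ) + 1) + t) =
      Real.Gamma t * ∏ k ∈ Finset.range (n + 1), (t + k) := by
    rw [show ((n : ℝ) + 1) + t = t + ((n + 1 : ℕ) : ℝ) by push_cast; ring,
      Gamma_add_nat t ht (n + 1)]
  have hPs : 0 < ∏ k ∈ Finset.range (n + 1), (s + (k : ℝ)) :=
    Finset.prod_pos fun k _ => by positivity
  have hPt : 0 < ∏ k ∈ Finset.range (n + 1), (t + (k : ℝ)) :=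
    Finset.prod_pos fun k _ => by positivity
  have hfac : (0 : ℝ) < (n.factorial : ℝ) := by exact_mod_cast n.factorial_pos
  have hr1 : (0 : ℝ) < (n : ℝ) ^ (t - s) := Real.rpow_pos_of_pos hn0 _
  have hr2 : (0 : ℝ) < (n : ℝ) ^ s := Real.rpow_pos_of_pos hn0 _
  have e1 : (n : ℝ) ^ t = (n : ℝ) ^ (t - s) * (n : ℝ) ^ s := by
    rw [← Real.rpow_add hn0]; ring_nf
  rw [Real.GammaSeq, Real.GammaSeq]
  push_cast
  rw [hGsn, hGtn, Real.div_rpow (by positivity) hn0.le, e1]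
  field_simp

set_option maxHeartbeats 1000000 in
lemma key_asymp (s t : ℝ) (hs : 0 < s) (ht : 0 < t) :
    Tendsto (fun N : ℕ =>
        (N : ℝ) * ((N : ℝ) ^ (t - s) * Real.Gamma (N + s) / Real.Gamma (N + t) - 1))
      atTop (nhds ((s - t) * (s + t - 1) / 2)) := by
  set L : ℝ := (s - t) * (s + t - 1) / 2 with hL
  set RR : ℕ → ℝ := fun N => (N : ℝ) ^ (t - s) * Real.Gamma (N + s) / Real.Gamma (N + t) with hRR
  set xx : ℕ → ℝ := fun N => Real.log (RR N) with hxx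
  set gg : ℕ → ℝ := fun k => (t - s) * (Real.log k - Real.log ((k : ℝ) + 1)) +
      (Real.log ((k : ℝ) + t) - Real.log ((k : ℝ) + s)) with hgg
  have hR1 : Tendsto RR atTop (nhds 1) := by
    rw [hRR]; exact ratio_tendsto_one s t hs ht
  have hRpos : ∀ N : ℕ, 1 ≤ N → 0 < RR N := by
    intro N hN
    have hN0 : (0 : ℝ) < N := by exact_mod_cast hN
    have h1 := Real.Gamma_pos_of_pos (show (0 : ℝ) < N + s by positivity)
    have h2 := Real.Gamma_pos_of_pos (show (0 : ℝ) < N + t by positivity)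
    have h3 := Real.rpow_pos_of_pos hN0 (t - s)
    simp only [hRR]
    positivity
  have hx0 : Tendsto xx atTop (nhds 0) := by
    have := hR1.log one_ne_zero
    rw [Real.log_one] at this
    exact this
  -- Claim A
  have hlog : ∀ m : ℕ, 1 ≤ m → xx m = (t - s) * Real.log m +
      Real.log (Real.Gamma (m + s)) - Real.log (Real.Gamma (m + t)) := by
    intro m hm
    have hm0 : (0 : ℝ) < m := by exact_mod_cast hm
    have h1 := Real.Gamma_pos_of_pos (show (0 : ℝ) < m + s by positivity)
    have h2 := Real.Gamma_pos_of_pos (show (0 : ℝ) < m + t by positivity)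
    have h3 := Real.rpow_pos_of_pos hm0 (t - s)
    simp only [hxx, hRR]
    rw [Real.log_div (by positivity) h2.ne', Real.log_mul h3.ne' h1.ne', Real.log_rpow hm0]
  have hA : ∀ k : ℕ, 1 ≤ k → xx k - xx (k + 1) = gg k := by
    intro k hk
    have hk0 : (0 : ℝ) < k := by exact_mod_cast hk
    have hks : (0 : ℝ) < (k : ℝ) + s := by positivity
    have hkt : (0 : ℝ) < (k : ℝ) + t := by positivity
    have hGks := Real.Gamma_pos_of_pos hks
    have hGkt := Real.Gamma_pos_of_pos hkt
    have hs1 : Real.Gamma (((k + 1 : ℕ) : ℝ) + s) = ((k : ℝ) + s) * Real.Gamma ((k : ℝ) + s) := by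
      rw [show (((k + 1 : ℕ) : ℝ) + s) = ((k : ℝ) + s) + 1 by push_cast; ring,
        Real.Gamma_add_one hks.ne']
    have ht1 : Real.Gamma (((k + 1 : ℕ) : ℝ) + t) = ((k : ℝ) + t) * Real.Gamma ((k : ℝ) + t) := by
      rw [show (((k + 1 : ℕ) : ℝ) + t) = ((k : ℝ) + t) + 1 by push_cast; ring,
        Real.Gamma_add_one hkt.ne']
    rw [hlog k hk, hlog (k + 1) (by omega), hs1, ht1, Real.log_mul hks.ne' hGks.ne',
      Real.log_mul hkt.ne' hGkt.ne']
    simp only [hgg]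
    push_cast
    ring
  -- constants
  set C : ℝ := 2 * |t - s| + 2 * t ^ 3 + 2 * s ^ 3 + |L| with hC
  have hC0 : (0 : ℝ) ≤ C := by positivity
  set k₀ : ℕ := max 2 (max (Nat.ceil (2 * s)) (Nat.ceil (2 * t))) with hk₀
  -- Claim B
  have hB : ∀ k : ℕ, k₀ ≤ k → |gg k - L * ((k : ℝ)⁻¹ - ((k : ℝ) + 1)⁻¹)| ≤ C / (k : ℝ) ^ 3 := by
    intro k hk
    have hK2 : (2 : ℝ) ≤ (k : ℝ) := by
      have : (2 : ℕ) ≤ k := le_trans (le_max_left _ _) hk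
      exact_mod_cast this
    have hKs : 2 * s ≤ (k : ℝ) := by
      have : Nat.ceil (2 * s) ≤ k := le_trans ((le_max_left _ _).trans (le_max_right _ _)) hk
      exact le_trans (Nat.le_ceil _) (by exact_mod_cast this)
    have hKt : 2 * t ≤ (k : ℝ) := by
      have : Nat.ceil (2 * t) ≤ k := le_trans ((le_max_right _ _).trans (le_max_right _ _)) hk
      exact le_trans (Nat.le_ceil _) (by exact_mod_cast this)
    have hK0 : (0 : ℝ) < (k : ℝ) := by linarith
    set K : ℝ := (k : ℝ) with hKdef
    have e1 : Real.log (K + 1) = Real.log K + Real.log (1 + 1 / K) := by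
      rw [← Real.log_mul hK0.ne' (by positivity)]
      congr 1; field_simp
    have e2 : Real.log (K + t) = Real.log K + Real.log (1 + t / K) := by
      rw [← Real.log_mul hK0.ne' (by positivity)]
      congr 1; field_simp
    have e3 : Real.log (K + s) = Real.log K + Real.log (1 + s / K) := by
      rw [← Real.log_mul hK0.ne' (by positivity)]
      congr 1; field_simp
    have hgk : gg k = -(t - s) * Real.log (1 + 1 / K) +
        (Real.log (1 + t / K) - Real.log (1 + s / K)) := by
      simp only [hgg]
      rw [e1, e2, e3]; ring
    have hid : gg k - L * (K⁻¹ - (K + 1)⁻¹) =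
        (-(t - s)) * (Real.log (1 + 1 / K) - 1 / K + (1 / K) ^ 2 / 2)
        + (Real.log (1 + t / K) - t / K + (t / K) ^ 2 / 2)
        - (Real.log (1 + s / K) - s / K + (s / K) ^ 2 / 2)
        + L / (K ^ 2 * (K + 1)) := by
      rw [hgk, hL]
      have hK1 : K + 1 ≠ 0 := by positivity
      field_simp
      ring
    rw [hid]
    have b1 := psi_bound (u := 1 / K) (by positivity)
      (by rw [div_le_div_iff₀ hK0 (by norm_num)]; linarith)
    have b2 := psi_bound (u := t / K) (by positivity)
      (by rw [div_le_div_iff₀ hK0 (by norm_num)]; linarith)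
    have b3 := psi_bound (u := s / K) (by positivity)
      (by rw [div_le_div_iff₀ hK0 (by norm_num)]; linarith)
    have b4 : |L / (K ^ 2 * (K + 1))| ≤ |L| / K ^ 3 := by
      rw [abs_div, abs_of_pos (show (0:ℝ) < K ^ 2 * (K + 1) by positivity)]
      exact div_le_div_of_nonneg_left (abs_nonneg L) (by positivity) (by nlinarith)
    refine (tri4 _ _ _ _).trans ?_
    rw [abs_mul, abs_neg]
    have c1 : |t - s| * |Real.log (1 + 1 / K) - 1 / K + (1 / K) ^ 2 / 2|
        ≤ |t - s| * (2 * (1 / K) ^ 3) := mul_le_mul_of_nonneg_left b1 (abs_nonneg _)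
    have hKcube : (0:ℝ) < K ^ 3 := by positivity
    have : |t - s| * (2 * (1 / K) ^ 3) + 2 * (t / K) ^ 3 + 2 * (s / K) ^ 3 + |L| / K ^ 3
        = C / K ^ 3 := by
      rw [hC]
      field_simp
    linarith [c1, b2, b3, b4]
  -- tail of 1/k^3
  have hsum3 : ∀ N M : ℕ, 2 ≤ N → N ≤ M →
      ∑ k ∈ Finset.Ico N M, (1 : ℝ) / (k : ℝ) ^ 3 ≤ 2 / (N : ℝ) ^ 2 := by
    intro N M hN hNM
    set v : ℕ → ℝ := fun k => (((k : ℝ) - 1) * k)⁻¹ with hv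
    have hle : ∀ k ∈ Finset.Ico N M, (1 : ℝ) / (k : ℝ) ^ 3 ≤ v k - v (k + 1) := by
      intro k hk
      have hk2 : 2 ≤ k := le_trans hN (Finset.mem_Ico.mp hk).1
      have hK : (2 : ℝ) ≤ (k : ℝ) := by exact_mod_cast hk2
      have h1 : (0 : ℝ) < (k : ℝ) - 1 := by linarith
      have h0 : (0 : ℝ) < (k : ℝ) := by linarith
      have h1' : ((k : ℝ) - 1) ≠ 0 := h1.ne'
      have h0' : ((k : ℝ)) ≠ 0 := h0.ne'
      have hp1 : ((k : ℝ) + 1) ≠ 0 := by positivity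
      have hveq : v k - v (k + 1) = 2 / (((k : ℝ) - 1) * k * ((k : ℝ) + 1)) := by
        simp only [hv]
        push_cast
        field_simp
        ring_nf
        field_simp
        ring
      rw [hveq, div_le_div_iff₀ (by positivity) (by positivity)]
      nlinarith [pow_nonneg h0.le 3, h0]
    have hvM : 0 ≤ v M := by
      have hM2 : 2 ≤ M := le_trans hN hNM
      have : (2 : ℝ) ≤ (M : ℝ) := by exact_mod_cast hM2
      simp only [hv]
      exact inv_nonneg.mpr (by nlinarith)
    have hN0 : (0 : ℝ) < (N : ℝ) := by
      have : (2 : ℝ) ≤ (N : ℝ) := by exact_mod_cast hN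
      linarith
    have hNr : (2 : ℝ) ≤ (N : ℝ) := by exact_mod_cast hN
    calc ∑ k ∈ Finset.Ico N M, (1 : ℝ) / (k : ℝ) ^ 3
        ≤ ∑ k ∈ Finset.Ico N M, (v k - v (k + 1)) := Finset.sum_le_sum hle
      _ = v N - v M := telescope v N M hNM
      _ ≤ v N := by linarith
      _ ≤ 2 / (N : ℝ) ^ 2 := by
          simp only [hv]
          rw [inv_eq_one_div, div_le_div_iff₀ (by nlinarith) (by positivity)]
          nlinarith
  -- Claim C : |xx N - L/N| ≤ 2C/N²
  have hEM : Tendsto (fun M : ℕ => xx M - L * (M : ℝ)⁻¹) atTop (nhds 0) := by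
    have h2 : Tendsto (fun M : ℕ => L * (M : ℝ)⁻¹) atTop (nhds (L * 0)) :=
      tendsto_const_nhds.mul (tendsto_inv_atTop_zero.comp tendsto_natCast_atTop_atTop)
    rw [mul_zero] at h2
    simpa using hx0.sub h2
  have hxE : ∀ N : ℕ, k₀ ≤ N → |xx N - L * (N : ℝ)⁻¹| ≤ 2 * C / (N : ℝ) ^ 2 := by
    intro N hN
    have h2N : 2 ≤ N := le_trans (le_max_left _ _) hN
    have hdiff : ∀ M : ℕ, N ≤ M →
        |(xx N - L * (N : ℝ)⁻¹) - (xx M - L * (M : ℝ)⁻¹)| ≤ 2 * C / (N : ℝ) ^ 2 := by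
      intro M hNM
      have e1 : ∑ k ∈ Finset.Ico N M, gg k = xx N - xx M := by
        rw [← telescope xx N M hNM]
        refine Finset.sum_congr rfl fun k hk => ?_
        exact (hA k (le_trans (by omega) (Finset.mem_Ico.mp hk).1)).symm
      have e2 : ∑ k ∈ Finset.Ico N M, L * ((k : ℝ)⁻¹ - ((k : ℝ) + 1)⁻¹)
          = L * (N : ℝ)⁻¹ - L * (M : ℝ)⁻¹ := by
        rw [← telescope (fun k : ℕ => L * (k : ℝ)⁻¹) N M hNM]
        refine Finset.sum_congr rfl fun k hk => ?_
        push_cast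
        ring
      have e : (xx N - L * (N : ℝ)⁻¹) - (xx M - L * (M : ℝ)⁻¹)
          = ∑ k ∈ Finset.Ico N M, (gg k - L * ((k : ℝ)⁻¹ - ((k : ℝ) + 1)⁻¹)) := by
        rw [Finset.sum_sub_distrib, e1, e2]; ring
      rw [e]
      calc |∑ k ∈ Finset.Ico N M, (gg k - L * ((k : ℝ)⁻¹ - ((k : ℝ) + 1)⁻¹))|
          ≤ ∑ k ∈ Finset.Ico N M, |gg k - L * ((k : ℝ)⁻¹ - ((k : ℝ) + 1)⁻¹)| :=
            Finset.abs_sum_le_sum_abs _ _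
        _ ≤ ∑ k ∈ Finset.Ico N M, C * ((1 : ℝ) / (k : ℝ) ^ 3) := by
            refine Finset.sum_le_sum fun k hk => ?_
            have := hB k (le_trans hN (Finset.mem_Ico.mp hk).1)
            rw [mul_one_div]
            exact this.trans_eq rfl
        _ = C * ∑ k ∈ Finset.Ico N M, (1 : ℝ) / (k : ℝ) ^ 3 := by
            rw [Finset.mul_sum]
        _ ≤ C * (2 / (N : ℝ) ^ 2) :=
            mul_le_mul_of_nonneg_left (hsum3 N M h2N hNM) hC0
        _ = 2 * C / (N : ℝ) ^ 2 := by ring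
    have hten : Tendsto (fun M : ℕ => |(xx N - L * (N : ℝ)⁻¹) - (xx M - L * (M : ℝ)⁻¹)|)
        atTop (nhds |(xx N - L * (N : ℝ)⁻¹) - 0|) := (tendsto_const_nhds.sub hEM).abs
    rw [sub_zero] at hten
    exact le_of_tendsto hten
      (by filter_upwards [eventually_ge_atTop N] with M hM using hdiff M hM)
  -- N * xx N → L
  have hNx : Tendsto (fun N : ℕ => (N : ℝ) * xx N) atTop (nhds L) := by
    have h0 : Tendsto (fun N : ℕ => (N : ℝ) * xx N - L) atTop (nhds 0) := by
      apply squeeze_zero_norm' (a := fun N : ℕ => 2 * C / (N : ℝ))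
      · filter_upwards [eventually_ge_atTop (max k₀ 1)] with N hN
        have hk₀N : k₀ ≤ N := le_trans (le_max_left _ _) hN
        have hN1 : 1 ≤ N := le_trans (le_max_right _ _) hN
        have hN0 : (0 : ℝ) < N := by exact_mod_cast hN1
        have heq : (N : ℝ) * xx N - L = (N : ℝ) * (xx N - L * (N : ℝ)⁻¹) := by
          field_simp
        rw [Real.norm_eq_abs, heq, abs_mul, abs_of_nonneg hN0.le]
        calc (N : ℝ) * |xx N - L * (N : ℝ)⁻¹| ≤ (N : ℝ) * (2 * C / (N : ℝ) ^ 2) :=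
              mul_le_mul_of_nonneg_left (hxE N hk₀N) hN0.le
          _ = 2 * C / (N : ℝ) := by field_simp
      · exact Tendsto.div_atTop tendsto_const_nhds tendsto_natCast_atTop_atTop
    have := h0.add (tendsto_const_nhds (x := L))
    rw [zero_add] at this
    refine this.congr fun N => by ring
  -- final step
  have hfinal : Tendsto (fun N : ℕ => (N : ℝ) * (RR N - 1)) atTop (nhds L) := by
    have hxsmall : ∀ᶠ N : ℕ in atTop, |xx N| ≤ 1 := by
      have h' : ∀ᶠ y : ℝ in nhds 0, |y| ≤ 1 := by
        filter_upwards [Metric.ball_mem_nhds (0 : ℝ) one_pos] with y hy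
        rw [Metric.mem_ball, Real.dist_eq, sub_zero] at hy
        exact hy.le
      exact hx0.eventually h'
    have h2 : Tendsto (fun N : ℕ => (N : ℝ) * (RR N - 1) - (N : ℝ) * xx N) atTop (nhds 0) := by
      apply squeeze_zero_norm' (a := fun N : ℕ => |(N : ℝ) * xx N| * |xx N|)
      · filter_upwards [eventually_ge_atTop 1, hxsmall] with N hN1 hN2
        have hN0 : (0 : ℝ) < N := by exact_mod_cast hN1
        have hRx : RR N = Real.exp (xx N) := (Real.exp_log (hRpos N hN1)).symm
        have heq : (N : ℝ) * (RR N - 1) - (N : ℝ) * xx N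
            = (N : ℝ) * (Real.exp (xx N) - 1 - xx N) := by
          rw [hRx]; ring
        rw [Real.norm_eq_abs, heq, abs_mul, abs_of_nonneg hN0.le]
        calc (N : ℝ) * |Real.exp (xx N) - 1 - xx N| ≤ (N : ℝ) * (xx N) ^ 2 :=
              mul_le_mul_of_nonneg_left (Real.abs_exp_sub_one_sub_id_le hN2) hN0.le
          _ = |(N : ℝ)| * |xx N| * |xx N| := by
              rw [abs_of_nonneg hN0.le, mul_assoc, abs_mul_abs_self, ← sq]
          _ = |(N : ℝ) * xx N| * |xx N| := by rw [abs_mul]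
      · have := (hNx.abs).mul (hx0.abs)
        simpa using this
    have := h2.add hNx
    rw [zero_add] at this
    refine this.congr fun N => by ring
  exact hfinal

lemma prod_tendsto {ι : Type*} (sι : Finset ι) (f : ι → ℕ → ℝ) (L : ι → ℝ)
    (h : ∀ i ∈ sι, Tendsto (fun N : ℕ => (N : ℝ) * (f i N - 1)) atTop (nhds (L i))) :
    Tendsto (fun N : ℕ => (N : ℝ) * ((∏ i ∈ sι, f i N) - 1)) atTop
      (nhds (∑ i ∈ sι, L i)) := by
  classical
  induction sι using Finset.induction_on with
  | empty => simpa using (tendsto_const_nhds : Tendsto (fun _ : ℕ => (0:ℝ)) atTop _)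
  | @insert x sι hnotmem ih =>
    have hx := h x (Finset.mem_insert_self _ _)
    have hrest := ih fun i hi => h i (Finset.mem_insert_of_mem hi)
    have hprod1 : Tendsto (fun N : ℕ => ∏ i ∈ sι, f i N) atTop (nhds 1) := by
      have h1 : Tendsto (fun N : ℕ => (N : ℝ)⁻¹ * ((N : ℝ) * ((∏ i ∈ sι, f i N) - 1)))
          atTop (nhds (0 * (∑ i ∈ sι, L i))) :=
        Tendsto.mul (tendsto_inv_atTop_zero.comp tendsto_natCast_atTop_atTop) hrest
      rw [zero_mul] at h1
      have h2 : Tendsto (fun N : ℕ => ((∏ i ∈ sι, f i N) - 1) + 1) atTop (nhds (0 + 1)) := by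
        refine Tendsto.add ?_ tendsto_const_nhds
        refine h1.congr' ?_
        filter_upwards [eventually_ge_atTop 1] with N hN
        have hN0 : (N : ℝ) ≠ 0 := by positivity
        field_simp
      simpa using h2
    simp only [Finset.prod_insert hnotmem, Finset.sum_insert hnotmem]
    have hcomb : Tendsto (fun N : ℕ => ((N : ℝ) * (f x N - 1)) * (∏ i ∈ sι, f i N)
        + (N : ℝ) * ((∏ i ∈ sι, f i N) - 1)) atTop
        (nhds (L x * 1 + ∑ i ∈ sι, L i)) := (hx.mul hprod1).add hrest
    rw [mul_one] at hcomb
    refine hcomb.congr fun N => by ring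

lemma sum_odd_sq (a : ℕ) : ∑ j ∈ Finset.Icc 1 a, (2 * (j : ℝ) - 1) = (a : ℝ) ^ 2 := by
  induction a with
  | zero => simp
  | succ n ih =>
    rw [Finset.sum_Icc_succ_top (by omega), ih]
    push_cast
    ring


/-- `M_a(A,B,C) = ∏_{j=1}^a Γ(1+A+B−C+jC)Γ(1+jC)/(Γ(1+A−C+jC)Γ(1+B−C+jC)Γ(1+C))`. -/
noncomputable def Mnorm (a : ℕ) (A B C : ℝ) : ℝ :=
  ∏ j ∈ Finset.Icc 1 a,
    Real.Gamma (1 + A + B - C + j * C) * Real.Gamma (1 + j * C) /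
      (Real.Gamma (1 + A - C + j * C) * Real.Gamma (1 + B - C + j * C) * Real.Gamma (1 + C))

set_option maxHeartbeats 1000000 in
theorem Mnorm_identity_and_asymptotics (a : ℕ) (ha : 0 < a) (β : ℝ) (hβ : 0 < β) :
    (∀ N : ℕ, 1 / Mnorm a (2 / β - 1) N (2 / β) =
        ∏ j ∈ Finset.Icc 1 a,
          Real.Gamma (2 * j / β) * Real.Gamma (1 + N + 2 * ((j : ℝ) - 1) / β) *
              Real.Gamma (1 + 2 / β) /
            (Real.Gamma (N + 2 * j / β) * Real.Gamma (1 + 2 * j / β))) ∧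
      Tendsto (fun N : ℕ =>
          (N : ℝ) * ((N : ℝ) ^ (2 * (a : ℝ) / β - a) / Mnorm a (2 / β - 1) N (2 / β) *
              Real.Gamma (1 + a) / Real.Gamma (2 / β) ^ a - 1))
        atTop (nhds ((a : ℝ) ^ 2 / β * (1 - 2 / β))) := by
  have hβ0 : β ≠ 0 := hβ.ne'
  have hc0 : (0 : ℝ) < 2 / β := by positivity
  have hGc : 0 < Real.Gamma (2 / β) := Real.Gamma_pos_of_pos hc0
  have part1 : ∀ N : ℕ, 1 / Mnorm a (2 / β - 1) N (2 / β) =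
      ∏ j ∈ Finset.Icc 1 a,
        Real.Gamma (2 * j / β) * Real.Gamma (1 + N + 2 * ((j : ℝ) - 1) / β) *
            Real.Gamma (1 + 2 / β) /
          (Real.Gamma (N + 2 * j / β) * Real.Gamma (1 + 2 * j / β)) := by
    intro N
    rw [Mnorm, one_div, ← Finset.prod_inv_distrib]
    refine Finset.prod_congr rfl fun j hj => ?_
    rw [show 1 + (2 / β - 1) + (N : ℝ) - 2 / β + (j : ℝ) * (2 / β) = (N : ℝ) + 2 * j / β by ring,
        show 1 + (j : ℝ) * (2 / β) = 1 + 2 * (j : ℝ) / β by ring,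
        show 1 + (2 / β - 1) - 2 / β + (j : ℝ) * (2 / β) = 2 * (j : ℝ) / β by ring,
        show 1 + (N : ℝ) - 2 / β + (j : ℝ) * (2 / β) = 1 + (N : ℝ) + 2 * ((j : ℝ) - 1) / β by ring,
        inv_div]
  refine ⟨part1, ?_⟩
  set f : ℕ → ℕ → ℝ := fun j N => (N : ℝ) ^ ((2 : ℝ) / β - 1) *
      Real.Gamma ((N : ℝ) + (1 + ((j : ℝ) - 1) * (2 / β))) /
      Real.Gamma ((N : ℝ) + (j : ℝ) * (2 / β)) with hf
  set Lf : ℕ → ℝ := fun j => ((1 + ((j : ℝ) - 1) * (2 / β)) - (j : ℝ) * (2 / β)) *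
      ((1 + ((j : ℝ) - 1) * (2 / β)) + (j : ℝ) * (2 / β) - 1) / 2 with hLf
  have keyj : ∀ j ∈ Finset.Icc 1 a,
      Tendsto (fun N : ℕ => (N : ℝ) * (f j N - 1)) atTop (nhds (Lf j)) := by
    intro j hj
    have hj1 : 1 ≤ j := (Finset.mem_Icc.mp hj).1
    have hjr : (1 : ℝ) ≤ (j : ℝ) := by exact_mod_cast hj1
    have h1 : (0 : ℝ) < 1 + ((j : ℝ) - 1) * (2 / β) := by
      have : (0 : ℝ) ≤ ((j : ℝ) - 1) * (2 / β) := mul_nonneg (by linarith) hc0.le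
      linarith
    have h2 : (0 : ℝ) < (j : ℝ) * (2 / β) := mul_pos (by linarith) hc0
    have hk := key_asymp _ _ h1 h2
    rw [show (j : ℝ) * (2 / β) - (1 + ((j : ℝ) - 1) * (2 / β)) = (2 : ℝ) / β - 1 by ring] at hk
    simpa [hf, hLf] using hk
  have htend := prod_tendsto (Finset.Icc 1 a) f Lf keyj
  have hsumL : ∑ j ∈ Finset.Icc 1 a, Lf j = (a : ℝ) ^ 2 / β * (1 - 2 / β) := by
    have h1 : ∀ j ∈ Finset.Icc 1 a, Lf j = (1 - 2 / β) / β * (2 * (j : ℝ) - 1) := by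
      intro j hj; simp only [hLf]; ring
    rw [Finset.sum_congr rfl h1, ← Finset.mul_sum, sum_odd_sq]
    ring
  rw [hsumL] at htend
  refine htend.congr' ?_
  filter_upwards [eventually_ge_atTop 1] with N hN
  have hN0 : (0 : ℝ) < (N : ℝ) := by exact_mod_cast hN
  have hfact : (0 : ℝ) < (a.factorial : ℝ) := by exact_mod_cast a.factorial_pos
  have hE : (N : ℝ) ^ (2 * (a : ℝ) / β - (a : ℝ)) / Mnorm a (2 / β - 1) N (2 / β) *
      Real.Gamma (1 + (a : ℝ)) / Real.Gamma (2 / β) ^ a = ∏ j ∈ Finset.Icc 1 a, f j N := by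
    have e0 : (N : ℝ) ^ (2 * (a : ℝ) / β - (a : ℝ)) / Mnorm a (2 / β - 1) N (2 / β) *
        Real.Gamma (1 + (a : ℝ)) / Real.Gamma (2 / β) ^ a
        = (N : ℝ) ^ (2 * (a : ℝ) / β - (a : ℝ)) * (1 / Mnorm a (2 / β - 1) N (2 / β)) *
          (Real.Gamma (1 + (a : ℝ)) / Real.Gamma (2 / β) ^ a) := by ring
    rw [e0, part1 N]
    have hT : ∀ j ∈ Finset.Icc 1 a,
        Real.Gamma (2 * j / β) * Real.Gamma (1 + N + 2 * ((j : ℝ) - 1) / β) *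
            Real.Gamma (1 + 2 / β) /
          (Real.Gamma (N + 2 * j / β) * Real.Gamma (1 + 2 * j / β))
        = (Real.Gamma (2 / β) / (j : ℝ)) *
          (Real.Gamma ((N : ℝ) + (1 + ((j : ℝ) - 1) * (2 / β))) /
            Real.Gamma ((N : ℝ) + (j : ℝ) * (2 / β))) := by
      intro j hj
      have hj1 : 1 ≤ j := (Finset.mem_Icc.mp hj).1
      have hjr : (1 : ℝ) ≤ (j : ℝ) := by exact_mod_cast hj1
      have hj0 : (0 : ℝ) < (j : ℝ) := by linarith
      have hjc : (0 : ℝ) < 2 * (j : ℝ) / β := by positivity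
      have hGjc : 0 < Real.Gamma (2 * (j : ℝ) / β) := Real.Gamma_pos_of_pos hjc
      have hGB : 0 < Real.Gamma ((N : ℝ) + (j : ℝ) * (2 / β)) :=
        Real.Gamma_pos_of_pos (by positivity)
      rw [show (1 : ℝ) + 2 / β = 2 / β + 1 by ring, Real.Gamma_add_one hc0.ne',
          show (1 : ℝ) + 2 * (j : ℝ) / β = 2 * (j : ℝ) / β + 1 by ring,
          Real.Gamma_add_one hjc.ne',
          show (1 : ℝ) + (N : ℝ) + 2 * ((j : ℝ) - 1) / β
            = (N : ℝ) + (1 + ((j : ℝ) - 1) * (2 / β)) by ring,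
          show (N : ℝ) + 2 * (j : ℝ) / β = (N : ℝ) + (j : ℝ) * (2 / β) by ring]
      field_simp
    rw [Finset.prod_congr rfl hT, Finset.prod_mul_distrib, Finset.prod_div_distrib,
        Finset.prod_const, Nat.card_Icc, Nat.add_sub_cancel]
    have hprodj : ∏ j ∈ Finset.Icc 1 a, (j : ℝ) = (a.factorial : ℝ) := by
      rw [← Nat.cast_prod]
      congr 1
      rw [← Finset.prod_Ico_id_eq_factorial a, Finset.Ico_add_one_right_eq_Icc]
    rw [hprodj, show (1 : ℝ) + (a : ℝ) = (a : ℝ) + 1 by ring, Real.Gamma_nat_eq_factorial]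
    have hX : (N : ℝ) ^ (2 * (a : ℝ) / β - (a : ℝ)) = ((N : ℝ) ^ ((2 : ℝ) / β - 1)) ^ a := by
      rw [show 2 * (a : ℝ) / β - (a : ℝ) = ((2 : ℝ) / β - 1) * (a : ℝ) by ring,
        Real.rpow_mul hN0.le, Real.rpow_natCast]
    have hfprod : ∏ j ∈ Finset.Icc 1 a, f j N
        = ((N : ℝ) ^ ((2 : ℝ) / β - 1)) ^ a *
          ∏ j ∈ Finset.Icc 1 a, (Real.Gamma ((N : ℝ) + (1 + ((j : ℝ) - 1) * (2 / β))) /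
            Real.Gamma ((N : ℝ) + (j : ℝ) * (2 / β))) := by
      rw [show ∏ j ∈ Finset.Icc 1 a, f j N = ∏ j ∈ Finset.Icc 1 a,
          ((N : ℝ) ^ ((2 : ℝ) / β - 1) * (Real.Gamma ((N : ℝ) + (1 + ((j : ℝ) - 1) * (2 / β))) /
            Real.Gamma ((N : ℝ) + (j : ℝ) * (2 / β)))) from
          Finset.prod_congr rfl fun j _ => by simp only [hf]; rw [mul_div_assoc],
        Finset.prod_mul_distrib, Finset.prod_const, Nat.card_Icc, Nat.add_sub_cancel]
    rw [hfprod, hX]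
    have hGcpow : (0 : ℝ) < Real.Gamma (2 / β) ^ a := by positivity
    field_simp
  rw [hE]
end

section
/- Suppose σ₀ is a twice-differentiable solution of the σ-form Painlevé III equation (xσ₀'')² + σ₀'(1+4σ₀')(xσ₀' − σ₀) = (aσ₀')² on an interval of x > 0. Then σ₁(x) := (a/2) x σ₀'(x) solves the linear equation A(x)σ₁'' + B(x)σ₁' + C(x)σ₁ = D(x), where A = 4x²σ₀'', B = 24x(σ₀')² − 16σ₀σ₀' + 4(x − a²)σ₀' − 2σ₀, C = −2σ₀'(4σ₀' + 1), and D = −aσ₀'(xσ₀' − σ₀). -/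
/-- If `σ₀` solves the σ-form Painlevé III equation
`(xσ₀'')² + σ₀'(1+4σ₀')(xσ₀' − σ₀) = (aσ₀')²` on an open interval `I ⊆ (0,∞)`
(with enough smoothness), then `σ₁(x) = (a/2) x σ₀'(x)` solves the linear equation
`A σ₁'' + B σ₁' + C σ₁ = D` with the stated coefficients. -/
theorem sigma1_solves_linear_ode (a : ℝ) (σ₀ : ℝ → ℝ) (I : Set ℝ)
    (hI : IsOpen I) (hIpos : I ⊆ Set.Ioi (0 : ℝ))
    (hd1 : ∀ x ∈ I, DifferentiableAt ℝ σ₀ x)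
    (hd2 : ∀ x ∈ I, DifferentiableAt ℝ (deriv σ₀) x)
    (hd3 : ∀ x ∈ I, DifferentiableAt ℝ (deriv (deriv σ₀)) x)
    (hPIII : ∀ x ∈ I,
      (x * deriv (deriv σ₀) x) ^ 2 +
          deriv σ₀ x * (1 + 4 * deriv σ₀ x) * (x * deriv σ₀ x - σ₀ x) =
        (a * deriv σ₀ x) ^ 2) :
    ∀ x ∈ I,
      (4 * x ^ 2 * deriv (deriv σ₀) x) *
          deriv (deriv (fun t => a / 2 * t * deriv σ₀ t)) x +
        (24 * x * (deriv σ₀ x) ^ 2 - 16 * σ₀ x * deriv σ₀ x +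
            4 * (x - a ^ 2) * deriv σ₀ x - 2 * σ₀ x) *
          deriv (fun t => a / 2 * t * deriv σ₀ t) x +
        (-2 * deriv σ₀ x * (4 * deriv σ₀ x + 1)) * (a / 2 * x * deriv σ₀ x) =
      -a * deriv σ₀ x * (x * deriv σ₀ x - σ₀ x) := by
  intro x hx
  have hxI : I ∈ nhds x := hI.mem_nhds hx
  -- derivatives at points of I
  have hS := (hd1 x hx).hasDerivAt
  have hP := (hd2 x hx).hasDerivAt
  have hQ := (hd3 x hx).hasDerivAt
  set s := σ₀ x with hs
  set p := deriv σ₀ x with hp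
  set q := deriv (deriv σ₀) x with hq
  set r := deriv (deriv (deriv σ₀)) x with hr
  -- first derivative of σ₁
  have hf1 : ∀ y ∈ I, HasDerivAt (fun t => a / 2 * t * deriv σ₀ t)
      (a / 2 * deriv σ₀ y + a / 2 * y * deriv (deriv σ₀) y) y := by
    intro y hy
    have h := (((hasDerivAt_id y).const_mul (a / 2)).fun_mul ((hd2 y hy).hasDerivAt))
    simpa [id] using h
  have hderiv1 : Set.EqOn (deriv (fun t => a / 2 * t * deriv σ₀ t))
      (fun y => a / 2 * deriv σ₀ y + a / 2 * y * deriv (deriv σ₀) y) I := by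
    intro y hy
    exact (hf1 y hy).deriv
  have hev : deriv (fun t => a / 2 * t * deriv σ₀ t)
      =ᶠ[nhds x] (fun y => a / 2 * deriv σ₀ y + a / 2 * y * deriv (deriv σ₀) y) :=
    Filter.eventuallyEq_of_mem hxI hderiv1
  have hf2 : deriv (deriv (fun t => a / 2 * t * deriv σ₀ t)) x
      = a / 2 * q + (a / 2 * q + a / 2 * x * r) := by
    rw [hev.deriv_eq]
    have h : HasDerivAt (fun y => a / 2 * deriv σ₀ y + a / 2 * y * deriv (deriv σ₀) y)
        (a / 2 * q + (a / 2 * 1 * q + a / 2 * x * r)) x := by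
      have h1 := hP.const_mul (a / 2)
      have h2 := (((hasDerivAt_id x).const_mul (a / 2)).fun_mul hQ)
      have := h1.fun_add h2
      convert this using 2
      rfl
      rfl
      all_goals simp [id, hq] <;> ring
    rw [h.deriv]
    ring
  have hd1x : deriv (fun t => a / 2 * t * deriv σ₀ t) x = a / 2 * p + a / 2 * x * q :=
    (hf1 x hx).deriv
  -- the differentiated Painlevé III equation
  have hF : HasDerivAt (fun t => (t * deriv (deriv σ₀) t) ^ 2 +
      deriv σ₀ t * (1 + 4 * deriv σ₀ t) * (t * deriv σ₀ t - σ₀ t) -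
      (a * deriv σ₀ t) ^ 2)
      (2 * x * q ^ 2 + 2 * x ^ 2 * q * r + (q + 8 * p * q) * (x * p - s)
        + p * (1 + 4 * p) * (x * q) - 2 * a ^ 2 * p * q) x := by
    have h1 : HasDerivAt (fun t => t * deriv (deriv σ₀) t) (q + x * r) x := by
      have := (hasDerivAt_id x).fun_mul hQ
      simpa [id] using this
    have h1sq := h1.fun_pow 2
    have h2 : HasDerivAt (fun t => deriv σ₀ t * (1 + 4 * deriv σ₀ t))
        (q * (1 + 4 * p) + p * (4 * q)) x := by
      exact hP.mul ((hP.const_mul (4 : ℝ)).const_add 1)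
    have h3 : HasDerivAt (fun t => t * deriv σ₀ t - σ₀ t) (p + x * q - p) x := by
      have h4 : HasDerivAt (fun t => t * deriv σ₀ t) (p + x * q) x := by
        have := (hasDerivAt_id x).fun_mul hP
        simpa [id] using this
      exact h4.sub hS
    have h5 := h2.fun_mul h3
    have h6 : HasDerivAt (fun t => (a * deriv σ₀ t) ^ 2) (2 * a ^ 2 * p * q) x := by
      have := (hP.const_mul a).fun_pow 2
      convert this using 1
      rfl
      rfl
      simp only [hp]
      ring
    have := (h1sq.fun_add h5).fun_sub h6
    convert this using 1
    rfl
    rfl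
    ring
  have hzero : (fun t => (t * deriv (deriv σ₀) t) ^ 2 +
      deriv σ₀ t * (1 + 4 * deriv σ₀ t) * (t * deriv σ₀ t - σ₀ t) -
      (a * deriv σ₀ t) ^ 2) =ᶠ[nhds x] (fun _ => (0 : ℝ)) := by
    filter_upwards [hxI] with y hy
    have := hPIII y hy
    linarith
  have hdE : 2 * x * q ^ 2 + 2 * x ^ 2 * q * r + (q + 8 * p * q) * (x * p - s)
      + p * (1 + 4 * p) * (x * q) - 2 * a ^ 2 * p * q = 0 := by
    have hF0 : HasDerivAt (fun _ : ℝ => (0 : ℝ))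
        (2 * x * q ^ 2 + 2 * x ^ 2 * q * r + (q + 8 * p * q) * (x * p - s)
          + p * (1 + 4 * p) * (x * q) - 2 * a ^ 2 * p * q) x :=
      hF.congr_of_eventuallyEq hzero.symm
    have := hF0.unique (hasDerivAt_const x 0)
    linarith [this]
  have hE := hPIII x hx
  rw [hf2, hd1x]
  linear_combination (a * x) * hdE + 2 * a * hE
end
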